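/- arXiv:2110.11755 — 2 statements merged into one kernel-verified Lean document; each statement's English description precedes it below -/
import Mathlib

section
/- For the stream o1 over Bool input 'reset' of length N+1 defined by o1(j) = 0 if reset(j), else o1(j-1)+1 (with out-of-bounds default 0), if for all 0 ≤ j ≤ N, (j ≥ 1 ∧ reset(j-1)) ∨ (j+1 ≤ N ∧ reset(j+1)) ∨ j = 0 ∨ j = N, where out-of-bounds accesses of reset default to false, then o1(j) ≤ 2 for all j. -/
theorem stmt_0 (N : ℕ) (reset : ℕ → Bool) (o1 : ℕ → ℕ)
    (hdef : ∀ j ≤ N, o1 j = if reset j then 0 else (if 0 < j then o1 (j - 1) else 0) + 1)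
    (hasm : ∀ j ≤ N, (1 ≤ j ∧ reset (j - 1) = true) ∨ (j + 1 ≤ N ∧ reset (j + 1) = true)
        ∨ j = 0 ∨ j = N) :
    ∀ j ≤ N, o1 j ≤ 2 := by
  intro j hj
  rw [hdef j hj]
  by_cases h1 : reset j = true
  · simp [h1]
  · simp only [h1, if_false]
    by_cases h2 : 0 < j
    · simp only [h2, if_true]
      -- suffices o1 (j-1) ≤ 1
      have hj1 : j - 1 ≤ N := by omega
      have key : o1 (j - 1) ≤ 1 := by
        rw [hdef (j - 1) hj1]
        by_cases h3 : reset (j - 1) = true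
        · simp [h3]
        · simp only [h3, if_false]
          by_cases h4 : 0 < j - 1
          · simp only [h4, if_true]
            rcases hasm (j - 1) hj1 with ⟨h5, h6⟩ | ⟨_, h6⟩ | h6 | h6
            · -- reset (j-2) = true
              have : j - 1 - 1 ≤ N := by omega
              rw [hdef _ this]
              simp [h6]
            · -- reset j = true, contradiction
              have : j - 1 + 1 = j := by omega
              rw [this] at h6
              exact absurd h6 h1
            · omega
            · omega
          · simp [h4]
      simp only [Bool.not_eq_true] at h1
      simp [h1]
      omega
    · simp [h2]
end

section
/- Let reset : Fin (N+1) → Bool and define o1 : Fin (N+1) → ℤ recursively by o1(j) = 0 if reset(j), else (if j > 0 then o1(j-1) else 0) + 1, and o2(j) = (if j > 0 then o1(j-1) else 0) + o1(j) + (if j < N then o1(j+1) else 0). If for every j with 0 ≤ j ≤ N we have (j > 0 ∧ reset(j-1)) ∨ (j < N ∧ reset(j+1)) (boundary accesses defaulting to false), then 0 ≤ o2(j) ≤ 3 for all j. -/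
/-!
The counter `o1` is reset to `0` whenever `reset` holds and otherwise grows by one, so it is
nonnegative and bounded by the distance to the last reset. The assumption forbids three
consecutive positions without a reset, hence `o1 ≤ 2`. For two neighbours, either the right one
is `0`, or it is the left one plus one and at most `2`; either way their sum is at most `3`.
Finally, a reset neighbour of `j` kills one of the three summands of `o2 j`, and the other two are
neighbours.
-/

def prevOrZero (c : ℕ → ℤ) (j : ℕ) : ℤ := if 0 < j then c (j - 1) else 0

@[simp]
theorem prevOrZero_zero (c : ℕ → ℤ) : prevOrZero c 0 = 0 := rfl

@[simp]
theorem prevOrZero_succ (c : ℕ → ℤ) (j : ℕ) : prevOrZero c (j + 1) = c j := rfl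

def IsResetCounter (N : ℕ) (reset : ℕ → Bool) (c : ℕ → ℤ) : Prop :=
  ∀ j ≤ N, c j = if reset j then 0 else prevOrZero c j + 1

def HasResetNeighbour (N : ℕ) (reset : ℕ → Bool) : Prop :=
  ∀ j ≤ N, (0 < j ∧ reset (j - 1) = true) ∨ (j < N ∧ reset (j + 1) = true)

namespace IsResetCounter

variable {N : ℕ} {reset : ℕ → Bool} {c : ℕ → ℤ}

theorem eq_zero_of_reset (hc : IsResetCounter N reset c) {j : ℕ} (hj : j ≤ N)
    (hr : reset j = true) : c j = 0 := by
  simp [hc j hj, hr]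

theorem eq_zero_or_eq_prevOrZero_add_one (hc : IsResetCounter N reset c) {j : ℕ} (hj : j ≤ N) :
    c j = 0 ∨ c j = prevOrZero c j + 1 := by
  rw [hc j hj]
  split <;> simp

theorem nonneg (hc : IsResetCounter N reset c) {j : ℕ} (hj : j ≤ N) : 0 ≤ c j := by
  induction j with
  | zero => rcases hc.eq_zero_or_eq_prevOrZero_add_one hj with h | h <;> simp [h]
  | succ j ih =>
    have := ih (by omega)
    rcases hc.eq_zero_or_eq_prevOrZero_add_one hj with h | h
    · simp [h]
    · simp only [h, prevOrZero_succ]; omega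

theorem prevOrZero_nonneg (hc : IsResetCounter N reset c) {j : ℕ} (hj : j ≤ N) :
    0 ≤ prevOrZero c j := by
  cases j with
  | zero => simp
  | succ j => exact hc.nonneg (by omega)

theorem le_prevOrZero_add_one (hc : IsResetCounter N reset c) {j : ℕ} (hj : j ≤ N) :
    c j ≤ prevOrZero c j + 1 := by
  have := hc.prevOrZero_nonneg hj
  rcases hc.eq_zero_or_eq_prevOrZero_add_one hj with h | h <;> omega

theorem le_of_reset_sub (hc : IsResetCounter N reset c) {m j : ℕ} (hj : j ≤ N) (hm : m ≤ j)
    (hr : reset (j - m) = true) : c j ≤ m := by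
  induction m generalizing j with
  | zero => simp [hc.eq_zero_of_reset hj hr]
  | succ m ih =>
    obtain ⟨i, rfl⟩ : ∃ i, j = i + 1 := ⟨j - 1, by omega⟩
    have hprev : c i ≤ m := ih (by omega) (by omega) (by simpa using hr)
    have := hc.le_prevOrZero_add_one hj
    simp only [prevOrZero_succ] at this
    omega

theorem le_two (hc : IsResetCounter N reset c) (hn : HasResetNeighbour N reset) {j : ℕ}
    (hj : j ≤ N) : c j ≤ 2 := by
  cases j with
  | zero => linarith [hc.le_prevOrZero_add_one hj, prevOrZero_zero c]
  | succ i =>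
    rcases hn i (by omega) with ⟨hi, hr⟩ | ⟨-, hr⟩
    · exact hc.le_of_reset_sub (m := 2) hj (by omega) (by simpa [show i + 1 - 2 = i - 1 by omega] using hr)
    · simp [hc.eq_zero_of_reset hj hr]

theorem prevOrZero_add_le_three (hc : IsResetCounter N reset c) (hn : HasResetNeighbour N reset)
    {j : ℕ} (hj : j ≤ N) : prevOrZero c j + c j ≤ 3 := by
  have hprev : prevOrZero c j ≤ 2 := by
    cases j with
    | zero => simp
    | succ i => exact hc.le_two hn (by omega)
  have := hc.le_two hn hj
  rcases hc.eq_zero_or_eq_prevOrZero_add_one hj with h | h <;> omega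

end IsResetCounter

theorem stmt_1 (N : ℕ) (reset : ℕ → Bool) (o1 o2 : ℕ → ℤ)
    (h1 : ∀ j ≤ N, o1 j = if reset j then 0 else (if 0 < j then o1 (j - 1) else 0) + 1)
    (h2 : ∀ j ≤ N, o2 j = (if 0 < j then o1 (j - 1) else 0) + o1 j
        + (if j < N then o1 (j + 1) else 0))
    (hasm : ∀ j ≤ N, (0 < j ∧ reset (j - 1) = true) ∨ (j < N ∧ reset (j + 1) = true)) :
    ∀ j ≤ N, 0 ≤ o2 j ∧ o2 j ≤ 3 := by
  have hc : IsResetCounter N reset o1 := h1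
  intro j hj
  set next := if j < N then o1 (j + 1) else 0
  have hnext_nonneg : 0 ≤ next := by
    unfold next; split
    · exact hc.nonneg (by omega)
    · rfl
  have hsum : o2 j = prevOrZero o1 j + o1 j + next := h2 j hj
  have hprev_nonneg := hc.prevOrZero_nonneg hj
  have hcur_nonneg := hc.nonneg hj
  refine ⟨by omega, ?_⟩
  rcases hasm j hj with ⟨hpos, hr⟩ | ⟨hlt, hr⟩
  · have hprev : prevOrZero o1 j = 0 := by
      simp [prevOrZero, hpos, hc.eq_zero_of_reset (by omega) hr]
    have hright : o1 j + next ≤ 3 := by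
      by_cases hlt : j < N
      · simpa [next, hlt] using hc.prevOrZero_add_le_three hasm (j := j + 1) (by omega)
      · simpa [next, hlt] using (hc.le_two hasm hj).trans (by norm_num)
    omega
  · have hnext : next = 0 := by simp [next, hlt, hc.eq_zero_of_reset (by omega) hr]
    have hleft := hc.prevOrZero_add_le_three hasm hj
    omega
end
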